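/- The set D⁺ is closed under the product rule (f∂^i)·(g∂^j) = Σ_{r≥0} C(i,r) f ∂^r(g) ∂^{i+j−r}: the product of two elements of D⁺ is well defined (each coefficient is a convergent sum in the complete graded algebra A = ∏_{i≥0} A_i) and again lies in D⁺, and with this product D⁺ is a unital associative algebra. Moreover (D⁻)₊ ⊆ D⁻ ∩ D⁺ and (D⁺)₋ ⊆ D⁻ ∩ D⁺. -/

import Mathlib

/-!
STATEMENT 1: Over a complete graded algebra A = ∏_{i≥0} A_i, the set
D⁺ = { Σ_{i∈ℤ} Σ_{j≥max(0,k−i)} a_{i,j} ∂^i } of pseudo-differential operators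
of the second type is closed under the product rule
(f∂^i)·(g∂^j) = Σ_{r≥0} C(i,r) f ∂^r(g) ∂^{i+j−r}: the product is well defined
(each graded component of each coefficient is a finite sum) and lies in D⁺,
with which D⁺ is a unital associative algebra; moreover
(D⁻)₊ ⊆ D⁻ ∩ D⁺ and (D⁺)₋ ⊆ D⁻ ∩ D⁺.

A series Σ_{i∈ℤ} Σ_{j≥0} a_{i,j} ∂^i with a_{i,j} ∈ A_j is modelled by the
function (i, j) ↦ a_{i,j} : ℤ → ℕ → R, the graded pieces A_j being submodules
of an ambient commutative ring R.
-/

/-- Generalized binomial coefficient `C(i,r)` for an integer `i`. -/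
def zbinom (i : ℤ) (r : ℕ) : ℤ :=
  if 0 ≤ i then ((i.toNat).choose r : ℤ)
  else (-1 : ℤ) ^ r * ((((r : ℤ) - i - 1).toNat).choose r : ℤ)

/-- The summand, indexed by `(i, j', p)`, of the degree-`m` component of the
coefficient of `∂^n` in the product of the two series `F` and `G`: with
`r := i + j' − n`, it is the degree-`m` part of `C(i,r)·F_{i,p}·∂^r(G_{j'})`. -/
def gTerm {R : Type*} [CommRing R] (d : R → R) (F G : ℤ → ℕ → R)
    (n : ℤ) (m : ℕ) : ℤ × ℤ × ℕ → R := fun x =>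
  if n ≤ x.1 + x.2.1 ∧ x.2.2 + (x.1 + x.2.1 - n).toNat ≤ m then
    zbinom x.1 (x.1 + x.2.1 - n).toNat •
      (F x.1 x.2.2 *
        d^[(x.1 + x.2.1 - n).toNat]
          (G x.2.1 (m - x.2.2 - (x.1 + x.2.1 - n).toNat)))
  else 0

/-- The product of two series of pseudo-differential operators. -/
noncomputable def gMul {R : Type*} [CommRing R] (d : R → R)
    (F G : ℤ → ℕ → R) : ℤ → ℕ → R :=
  fun n m => ∑ᶠ x : ℤ × ℤ × ℕ, gTerm d F G n m x

/-- The coefficients have homogeneous components in the graded pieces. -/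
def gmem {R : Type*} [CommRing R] [Algebra ℚ R] (𝒜 : ℕ → Submodule ℚ R)
    (F : ℤ → ℕ → R) : Prop := ∀ (i : ℤ) (j : ℕ), F i j ∈ 𝒜 j

/-- Membership in D⁺: there is k ∈ ℤ with a_{i,j} = 0 for j < k − i. -/
def isDP {R : Type*} [CommRing R] (F : ℤ → ℕ → R) : Prop :=
  ∃ k : ℤ, ∀ (i : ℤ) (j : ℕ), (j : ℤ) < k - i → F i j = 0

/-- Membership in D⁻: the coefficients vanish for large i. -/
def isDM {R : Type*} [CommRing R] (F : ℤ → ℕ → R) : Prop :=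
  ∃ N : ℤ, ∀ i : ℤ, N < i → ∀ j : ℕ, F i j = 0

/-- The identity operator. -/
def gOne {R : Type*} [CommRing R] : ℤ → ℕ → R :=
  fun i j => if i = 0 ∧ j = 0 then 1 else 0

/-- The differential part A₊ of a series. -/
def gPlus {R : Type*} [CommRing R] (F : ℤ → ℕ → R) : ℤ → ℕ → R :=
  fun i j => if 0 ≤ i then F i j else 0

/-- The negative part A₋ of a series. -/
def gMinus {R : Type*} [CommRing R] (F : ℤ → ℕ → R) : ℤ → ℕ → R :=
  fun i j => if i < 0 then F i j else 0

/-!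
Indexing each coefficient of a product by the number `r` of derivatives that fall on the right
factor turns it into a sum over a box cut out by the `D⁺` bounds, hence a finite sum; closure,
bilinearity and unitality then hold term by term. For associativity, both bracketings of
`F·G·H` expand, after Leibniz's rule on the right, into combinations of the terms
`F_{i,p} ∂^a(G_{j,q}) ∂^b(H_{l,c})`, and their coefficients agree by the Chu–Vandermonde identity
`C(i,a) C(i+j-a,b) = Σ_{e+s=b} C(a+e,a) C(i,a+e) C(j,s)`.
-/

open Finset Function

theorem finsum_eq_finsum_of_injOn {α β M : Type*} [AddCommMonoid M] {f : α → M} {g : β → M}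
    (e : β → α) {s : Set β} (hg : ∀ b ∉ s, g b = 0) (he : Set.InjOn e s)
    (hf : support f ⊆ e '' s) (hfg : ∀ b ∈ s, f (e b) = g b) :
    ∑ᶠ a, f a = ∑ᶠ b, g b := by
  calc ∑ᶠ a, f a = ∑ᶠ a ∈ e '' s, f a := by
        rw [← finsum_mem_univ f]
        exact finsum_mem_inter_support_eq _ _ _ (by rw [Set.univ_inter, Set.inter_eq_right.2 hf])
    _ = ∑ᶠ b ∈ s, g b := by rw [finsum_mem_image he]; exact finsum_mem_congr rfl hfg
    _ = ∑ᶠ b, g b := by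
        rw [← finsum_mem_univ g]
        refine finsum_mem_inter_support_eq _ _ _ ?_
        rw [Set.univ_inter, Set.inter_eq_right]
        exact fun b hb => not_not.1 (mt (hg b) hb)

theorem finsum_eq_finsum_of_injective {α β M : Type*} [AddCommMonoid M] {f : α → M}
    {g : β → M} (e : β → α) (he : Injective e) (hf : support f ⊆ Set.range e)
    (hfg : ∀ b, f (e b) = g b) : ∑ᶠ a, f a = ∑ᶠ b, g b :=
  finsum_eq_finsum_of_injOn e (s := Set.univ) (fun b hb => absurd trivial hb) he.injOn
    (by rwa [Set.image_univ]) fun b _ => hfg b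

theorem Function.HasFiniteSupport.of_support_subset_image {α β M : Type*} [Zero M] {f : α → M}
    {g : β → M} (e : β → α) {s : Set β} (hf : support f ⊆ e '' s) (hfg : ∀ b ∈ s, f (e b) = g b)
    (hg : HasFiniteSupport g) : HasFiniteSupport f := by
  refine (hg.image e).subset fun a ha => ?_
  obtain ⟨b, hb, rfl⟩ := hf ha
  exact ⟨b, by rwa [mem_support, ← hfg b hb], rfl⟩

theorem Finset.Nat.sum_antidiagonal_eq_finsum {M : Type*} [AddCommMonoid M] (f : ℕ × ℕ → M)
    (n : ℕ) : ∑ x ∈ antidiagonal n, f x = ∑ᶠ k, if k ≤ n then f (k, n - k) else 0 := by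
  rw [Nat.sum_antidiagonal_eq_sum_range_succ_mk,
    finsum_eq_sum_of_support_subset _ (s := range (n + 1))]
  · exact sum_congr rfl fun k hk => (if_pos (Nat.lt_succ_iff.1 (mem_range.1 hk))).symm
  · intro k hk
    by_contra hkn
    exact hk (if_neg (by simpa [Nat.lt_succ_iff] using hkn))

theorem Ring.choose_mul_choose_add_sub {R : Type*} [CommRing R] [BinomialRing R]
    (i j : R) (a b : ℕ) :
    choose i a * choose (i + j - a) b =
      ∑ x ∈ antidiagonal b, (a + x.1).choose a • (choose i (a + x.1) * choose j x.2) := by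
  rw [show i + j - a = (i - a) + j by ring, add_choose_eq b (Commute.all _ _), mul_sum]
  refine sum_congr rfl fun x _ => ?_
  rw [← mul_assoc, ← smul_mul_assoc, choose_smul_choose i (Nat.le_add_right a x.1),
    Nat.add_sub_cancel_left]

theorem zbinom_eq_choose (i : ℤ) (r : ℕ) : zbinom i r = Ring.choose i r := by
  unfold zbinom
  split_ifs with hi
  · lift i to ℕ using hi
    rw [Int.toNat_natCast, Ring.choose_natCast]
  · obtain ⟨k, rfl⟩ : ∃ k : ℕ, i = -k := ⟨i.natAbs, by omega⟩
    rw [Ring.choose_neg, show (r : ℤ) - -(k : ℤ) - 1 = ((k + r - 1 : ℕ) : ℤ) by omega,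
      Int.toNat_natCast, show (k : ℤ) + r - 1 = ((k + r - 1 : ℕ) : ℤ) by omega,
      Ring.choose_natCast, Units.smul_def, Int.coe_negOnePow_natCast, smul_eq_mul]

theorem iterate_mem_of_map_mem {M σ : Type*} [SetLike σ M] {𝒜 : ℕ → σ} {d : M → M}
    (hd : ∀ (i : ℕ) (a : M), a ∈ 𝒜 i → d a ∈ 𝒜 (i + 1)) (k : ℕ) {q : ℕ} {a : M}
    (ha : a ∈ 𝒜 q) : d^[k] a ∈ 𝒜 (q + k) := by
  induction k with
  | zero => exact ha
  | succ k ih => rw [iterate_succ_apply', ← add_assoc]; exact hd _ _ ih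

namespace Derivation

variable {S A : Type*} [CommSemiring S] [CommSemiring A] [Algebra S A] (D : Derivation S A A)

theorem iterate_eq_pow (k : ℕ) : (⇑D)^[k] = ⇑((D : Module.End S A) ^ k) :=
  (Module.End.coe_pow _ k).symm

theorem iterate_apply_mul (k : ℕ) (a b : A) :
    (⇑D)^[k] (a * b) = ∑ x ∈ antidiagonal k, k.choose x.1 • ((⇑D)^[x.1] a * (⇑D)^[x.2] b) := by
  induction k with
  | zero => simp
  | succ k ih =>
    rw [sum_antidiagonal_choose_succ_nsmul (M := A) (fun i j => (⇑D)^[i] a * (⇑D)^[j] b) k]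
    simp only [Function.iterate_succ_apply', ih, map_sum, map_nsmul, leibniz, smul_eq_mul,
      smul_add, sum_add_distrib]
    congr 1
    refine sum_congr rfl fun x hx => ?_
    rw [k.choose_symm_of_eq_add (mem_antidiagonal.1 hx).symm, mul_comm]

end Derivation

section Product

variable {R : Type*} [CommRing R]

/-- `gTerm` indexed by `(i, r, p)`, where `r` is the number of derivatives falling on `G`; the
order `n - i + r` of the `G`-factor then replaces the `toNat` bookkeeping of `gTerm`. -/
def mulTerm (d : R → R) (F G : ℤ → ℕ → R) (n : ℤ) (m : ℕ) : ℤ × ℕ × ℕ → R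
  | (i, r, p) =>
    if p + r ≤ m then Ring.choose i r • (F i p * d^[r] (G (n - i + r) (m - p - r))) else 0

theorem mulTerm_ne_zero {d : R → R} (hd : d 0 = 0) {F G : ℤ → ℕ → R} {n : ℤ} {m : ℕ}
    {i : ℤ} {r p : ℕ} (h : mulTerm d F G n m (i, r, p) ≠ 0) :
    p + r ≤ m ∧ F i p ≠ 0 ∧ G (n - i + r) (m - p - r) ≠ 0 := by
  rw [mulTerm] at h
  split_ifs at h with hm
  · refine ⟨hm, fun hF => h ?_, fun hG => h ?_⟩
    · rw [hF, zero_mul, smul_zero]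
    · rw [hG, iterate_fixed hd, mul_zero, smul_zero]
  · exact absurd rfl h

def mulIndex (n : ℤ) : ℤ × ℕ × ℕ → ℤ × ℤ × ℕ
  | (i, r, p) => (i, n - i + r, p)

theorem mulIndex_injective (n : ℤ) : Injective (mulIndex n) := by
  rintro ⟨i, r, p⟩ ⟨i', r', p'⟩ h
  simp only [mulIndex, Prod.mk.injEq] at h ⊢
  omega

theorem gTerm_mulIndex (d : R → R) (F G : ℤ → ℕ → R) (n : ℤ) (m : ℕ) (x : ℤ × ℕ × ℕ) :
    gTerm d F G n m (mulIndex n x) = mulTerm d F G n m x := by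
  obtain ⟨i, r, p⟩ := x
  have hr : (i + (n - i + r) - n).toNat = r := by omega
  have hn : n ≤ i + (n - i + r) := by omega
  simp only [mulIndex, gTerm, mulTerm, hr, zbinom_eq_choose, hn, true_and]

theorem support_gTerm_subset (d : R → R) (F G : ℤ → ℕ → R) (n : ℤ) (m : ℕ) :
    support (gTerm d F G n m) ⊆ Set.range (mulIndex n) := by
  rintro ⟨i, j, p⟩ h
  have hn : n ≤ i + j := by
    by_contra hn
    exact h (by simp only [gTerm, hn, false_and, if_false])
  refine ⟨(i, (i + j - n).toNat, p), ?_⟩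
  have := Int.toNat_of_nonneg (sub_nonneg.2 hn)
  simp only [mulIndex, Prod.mk.injEq, true_and, and_true]
  omega

theorem gMul_eq_finsum_mulTerm (d : R → R) (F G : ℤ → ℕ → R) (n : ℤ) (m : ℕ) :
    gMul d F G n m = ∑ᶠ x, mulTerm d F G n m x :=
  finsum_eq_finsum_of_injective _ (mulIndex_injective n) (support_gTerm_subset d F G n m)
    (gTerm_mulIndex d F G n m)

theorem hasFiniteSupport_mulTerm {d : R → R} (hd : d 0 = 0) {F G : ℤ → ℕ → R}
    (hF : isDP F) (hG : isDP G) (n : ℤ) (m : ℕ) : HasFiniteSupport (mulTerm d F G n m) := by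
  obtain ⟨k₁, hk₁⟩ := hF
  obtain ⟨k₂, hk₂⟩ := hG
  refine (Set.finite_Icc ((k₁ - m, 0, 0) : ℤ × ℕ × ℕ) (n + 2 * m - k₂, m, m)).subset ?_
  rintro ⟨i, r, p⟩ h
  obtain ⟨hm, hFi, hGi⟩ := mulTerm_ne_zero hd h
  have h₁ := mt (hk₁ i p) hFi
  have h₂ := mt (hk₂ _ _) hGi
  simp only [Set.mem_Icc, Prod.le_def]
  omega

theorem hasFiniteSupport_gTerm {d : R → R} (hd : d 0 = 0) {F G : ℤ → ℕ → R}
    (hF : isDP F) (hG : isDP G) (n : ℤ) (m : ℕ) : HasFiniteSupport (gTerm d F G n m) :=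
  HasFiniteSupport.of_support_subset_image _ (s := Set.univ)
    (by rw [Set.image_univ]; exact support_gTerm_subset d F G n m)
    (fun x _ => gTerm_mulIndex d F G n m x) (hasFiniteSupport_mulTerm hd hF hG n m)

theorem isDP_gMul {d : R → R} (hd : d 0 = 0) {F G : ℤ → ℕ → R} (hF : isDP F) (hG : isDP G) :
    isDP (gMul d F G) := by
  obtain ⟨k₁, hk₁⟩ := hF
  obtain ⟨k₂, hk₂⟩ := hG
  refine ⟨k₁ + k₂, fun n m hm => ?_⟩
  rw [gMul_eq_finsum_mulTerm]
  refine finsum_eq_zero_of_forall_eq_zero fun ⟨i, r, p⟩ => ?_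
  by_contra h
  obtain ⟨hpr, hFi, hGi⟩ := mulTerm_ne_zero hd h
  have h₁ := mt (hk₁ i p) hFi
  have h₂ := mt (hk₂ _ _) hGi
  omega

theorem gmem_gMul [Algebra ℚ R] {𝒜 : ℕ → Submodule ℚ R} {d : R → R}
    (hd : d 0 = 0)
    (hmul : ∀ (i j : ℕ) (a b : R), a ∈ 𝒜 i → b ∈ 𝒜 j → a * b ∈ 𝒜 (i + j))
    (hder : ∀ (i : ℕ) (a : R), a ∈ 𝒜 i → d a ∈ 𝒜 (i + 1))
    {F G : ℤ → ℕ → R} (hFm : gmem 𝒜 F) (hGm : gmem 𝒜 G) (hF : isDP F) (hG : isDP G) :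
    gmem 𝒜 (gMul d F G) := by
  intro n m
  rw [gMul_eq_finsum_mulTerm, finsum_eq_sum _ (hasFiniteSupport_mulTerm hd hF hG n m)]
  refine Submodule.sum_mem _ fun ⟨i, r, p⟩ _ => ?_
  rw [mulTerm]
  split_ifs with hpr
  · refine Submodule.smul_of_tower_mem _ _ ?_
    have hmem := hmul _ _ _ _ (hFm i p)
      (iterate_mem_of_map_mem hder r (hGm (n - i + r) (m - p - r)))
    rwa [show p + (m - p - r + r) = m by omega] at hmem
  · exact zero_mem _

end Product

section Algebra

variable {R : Type*} [CommRing R]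

theorem gOne_mul (d : R → R) (F : ℤ → ℕ → R) : gMul d gOne F = F := by
  funext n m
  rw [gMul_eq_finsum_mulTerm, finsum_eq_single _ (0, 0, 0)]
  · simp [mulTerm, gOne]
  rintro ⟨i, r, p⟩ hx
  rw [mulTerm]
  split_ifs
  · by_cases hip : i = 0 ∧ p = 0
    · obtain ⟨rfl, rfl⟩ := hip
      have hr : r ≠ 0 := by rintro rfl; exact hx rfl
      rw [Ring.choose_zero_pos ℤ (Nat.pos_of_ne_zero hr), zero_smul]
    · simp [gOne, hip]
  · rfl

theorem gMul_one {d : R → R} (hd₀ : d 0 = 0) (hd₁ : d 1 = 0) (F : ℤ → ℕ → R) :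
    gMul d F gOne = F := by
  funext n m
  rw [gMul_eq_finsum_mulTerm, finsum_eq_single _ (n, 0, m)]
  · simp [mulTerm, gOne]
  rintro ⟨i, r, p⟩ hx
  rw [mulTerm]
  split_ifs with hpr
  · by_cases hG : n - i + r = 0 ∧ m - p - r = 0
    · obtain ⟨k, rfl⟩ : ∃ k, r = k + 1 := Nat.exists_eq_add_one.2 <| Nat.pos_of_ne_zero <| by
        rintro rfl
        exact hx (by simp only [Prod.mk.injEq, true_and]; omega)
      rw [show (gOne (n - i + ↑(k + 1)) (m - p - (k + 1)) : R) = 1 from if_pos hG,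
        iterate_succ_apply, hd₁, iterate_fixed hd₀, mul_zero, smul_zero]
    · rw [show (gOne (n - i + r) (m - p - r) : R) = 0 from if_neg hG, iterate_fixed hd₀,
        mul_zero, smul_zero]
  · rfl

variable {S : Type*} [CommSemiring S] [Algebra S R]

theorem mulTerm_add_left (d : R → R) (F G H : ℤ → ℕ → R) (n : ℤ) (m : ℕ) (x : ℤ × ℕ × ℕ) :
    mulTerm d (F + G) H n m x = mulTerm d F H n m x + mulTerm d G H n m x := by
  obtain ⟨i, r, p⟩ := x
  simp only [mulTerm]
  split_ifs
  · simp only [Pi.add_apply, add_mul, smul_add]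
  · rw [add_zero]

theorem mulTerm_smul_left (d : R → R) (c : S) (F G : ℤ → ℕ → R) (n : ℤ) (m : ℕ)
    (x : ℤ × ℕ × ℕ) : mulTerm d (c • F) G n m x = c • mulTerm d F G n m x := by
  obtain ⟨i, r, p⟩ := x
  simp only [mulTerm]
  split_ifs
  · rw [Pi.smul_apply, Pi.smul_apply, smul_mul_assoc, smul_comm]
  · rw [smul_zero]

theorem gMul_add_left {d : R → R} (hd : d 0 = 0) {F G H : ℤ → ℕ → R} (hF : isDP F)
    (hG : isDP G) (hH : isDP H) : gMul d (F + G) H = gMul d F H + gMul d G H := by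
  funext n m
  simp only [Pi.add_apply, gMul_eq_finsum_mulTerm, mulTerm_add_left]
  exact finsum_add_distrib (hasFiniteSupport_mulTerm hd hF hH n m)
    (hasFiniteSupport_mulTerm hd hG hH n m)

theorem gMul_smul_left {d : R → R} (hd : d 0 = 0) (c : S) {F G : ℤ → ℕ → R} (hF : isDP F)
    (hG : isDP G) : gMul d (c • F) G = c • gMul d F G := by
  funext n m
  simp only [Pi.smul_apply, gMul_eq_finsum_mulTerm, mulTerm_smul_left]
  exact (smul_finsum' c (hasFiniteSupport_mulTerm hd hF hG n m)).symm

variable (d : Derivation S R R)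

theorem mulTerm_add_right (F G H : ℤ → ℕ → R) (n : ℤ) (m : ℕ) (x : ℤ × ℕ × ℕ) :
    mulTerm d F (G + H) n m x = mulTerm d F G n m x + mulTerm d F H n m x := by
  obtain ⟨i, r, p⟩ := x
  simp only [mulTerm]
  split_ifs
  · simp only [Pi.add_apply, d.iterate_eq_pow, map_add, mul_add, smul_add]
  · rw [add_zero]

theorem mulTerm_smul_right (c : S) (F G : ℤ → ℕ → R) (n : ℤ) (m : ℕ) (x : ℤ × ℕ × ℕ) :
    mulTerm d F (c • G) n m x = c • mulTerm d F G n m x := by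
  obtain ⟨i, r, p⟩ := x
  simp only [mulTerm]
  split_ifs
  · rw [Pi.smul_apply, Pi.smul_apply, d.iterate_eq_pow, map_smul, mul_smul_comm, smul_comm]
  · rw [smul_zero]

variable {d}

theorem gMul_add_right {F G H : ℤ → ℕ → R} (hF : isDP F) (hG : isDP G) (hH : isDP H) :
    gMul d F (G + H) = gMul d F G + gMul d F H := by
  funext n m
  simp only [Pi.add_apply, gMul_eq_finsum_mulTerm, mulTerm_add_right]
  exact finsum_add_distrib (hasFiniteSupport_mulTerm d.map_zero hF hG n m)
    (hasFiniteSupport_mulTerm d.map_zero hF hH n m)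

theorem gMul_smul_right (c : S) {F G : ℤ → ℕ → R} (hF : isDP F) (hG : isDP G) :
    gMul d F (c • G) = c • gMul d F G := by
  funext n m
  simp only [Pi.smul_apply, gMul_eq_finsum_mulTerm, mulTerm_smul_right]
  exact (smul_finsum' c (hasFiniteSupport_mulTerm d.map_zero hF hG n m)).symm

end Algebra

section Truncation

variable {R : Type*} [CommRing R]

theorem gmem_gPlus [Algebra ℚ R] {𝒜 : ℕ → Submodule ℚ R} {F : ℤ → ℕ → R} (hF : gmem 𝒜 F) :
    gmem 𝒜 (gPlus F) := fun i j => by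
  unfold gPlus; split_ifs; exacts [hF i j, zero_mem _]

theorem gmem_gMinus [Algebra ℚ R] {𝒜 : ℕ → Submodule ℚ R} {F : ℤ → ℕ → R} (hF : gmem 𝒜 F) :
    gmem 𝒜 (gMinus F) := fun i j => by
  unfold gMinus; split_ifs; exacts [hF i j, zero_mem _]

theorem isDM_gPlus {F : ℤ → ℕ → R} (hF : isDM F) : isDM (gPlus F) := by
  obtain ⟨N, hN⟩ := hF
  exact ⟨N, fun i hi j => by unfold gPlus; split_ifs; exacts [hN i hi j, rfl]⟩

theorem isDP_gPlus (F : ℤ → ℕ → R) : isDP (gPlus F) :=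
  ⟨0, fun i j hj => if_neg (by omega)⟩

theorem isDM_gMinus (F : ℤ → ℕ → R) : isDM (gMinus F) :=
  ⟨-1, fun i hi j => if_neg (by omega)⟩

theorem isDP_gMinus {F : ℤ → ℕ → R} (hF : isDP F) : isDP (gMinus F) := by
  obtain ⟨k, hk⟩ := hF
  exact ⟨k, fun i j hj => by unfold gMinus; split_ifs; exacts [hk i j hj, rfl]⟩

end Truncation

section Associativity

variable {R : Type*} [CommRing R]

/-- The term `F_{i,p} ∂^a(G_{j,q}) ∂^b(H_{l,c})`, where `l = n - i - j + a + b` and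
`c = m - p - q - a - b` are forced by the target order `n` and degree `m`. -/
def tripleTerm (d : R → R) (F G H : ℤ → ℕ → R) (n : ℤ) (m : ℕ) :
    ℤ × ℤ × ℕ × ℕ × ℕ × ℕ → R
  | (i, j, a, b, p, q) =>
    if p + q + a + b ≤ m then
      F i p * (d^[a] (G j q) * d^[b] (H (n - i - j + a + b) (m - p - q - a - b)))
    else 0

def assocLeftCoeff : ℤ × ℤ × ℕ × ℕ × ℕ × ℕ → ℤ
  | (i, j, a, b, _, _) => Ring.choose i a * Ring.choose (i + j - a) b

/-- In `F·(G·H)`, `e` of the `b` derivatives on `H` come from the outer product. -/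
def assocRightCoeff : ℤ × ℤ × ℕ × ℕ × ℕ × ℕ → ℕ → ℤ
  | (i, j, a, b, _, _), e =>
    if e ≤ b then (a + e).choose a • (Ring.choose i (a + e) * Ring.choose j (b - e)) else 0

theorem assocLeftCoeff_eq_finsum (w : ℤ × ℤ × ℕ × ℕ × ℕ × ℕ) :
    assocLeftCoeff w = ∑ᶠ e, assocRightCoeff w e := by
  obtain ⟨i, j, a, b, p, q⟩ := w
  rw [assocLeftCoeff, Ring.choose_mul_choose_add_sub, Nat.sum_antidiagonal_eq_finsum]
  rfl

theorem tripleTerm_ne_zero {d : R → R} (hd : d 0 = 0) {F G H : ℤ → ℕ → R} {n : ℤ} {m : ℕ}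
    {i j : ℤ} {a b p q : ℕ} (h : tripleTerm d F G H n m (i, j, a, b, p, q) ≠ 0) :
    p + q + a + b ≤ m ∧ F i p ≠ 0 ∧ G j q ≠ 0 ∧
      H (n - i - j + a + b) (m - p - q - a - b) ≠ 0 := by
  rw [tripleTerm] at h
  split_ifs at h with hm
  · refine ⟨hm, fun hF => h ?_, fun hG => h ?_, fun hH => h ?_⟩
    · rw [hF, zero_mul]
    · rw [hG, iterate_fixed hd, zero_mul, mul_zero]
    · rw [hH, iterate_fixed hd, mul_zero, mul_zero]
  · exact absurd rfl h

theorem hasFiniteSupport_tripleTerm {d : R → R} (hd : d 0 = 0) {F G H : ℤ → ℕ → R}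
    (hF : isDP F) (hG : isDP G) (hH : isDP H) (n : ℤ) (m : ℕ) :
    HasFiniteSupport (tripleTerm d F G H n m) := by
  obtain ⟨k₁, hk₁⟩ := hF
  obtain ⟨k₂, hk₂⟩ := hG
  obtain ⟨k₃, hk₃⟩ := hH
  refine (Set.finite_Icc ((k₁ - m, k₂ - m, 0, 0, 0, 0) : ℤ × ℤ × ℕ × ℕ × ℕ × ℕ)
    (n + 4 * m - k₂ - k₃, n + 4 * m - k₁ - k₃, m, m, m, m)).subset ?_
  rintro ⟨i, j, a, b, p, q⟩ h
  obtain ⟨hm, hFi, hGj, hHl⟩ := tripleTerm_ne_zero hd h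
  have h₁ := mt (hk₁ i p) hFi
  have h₂ := mt (hk₂ j q) hGj
  have h₃ := mt (hk₃ _ _) hHl
  simp only [Set.mem_Icc, Prod.le_def]
  omega

/-- The summand of `(F·G)·H` indexed by the terms `(u, s, p₂)` of the outer and `(i, r, p)` of
the inner product. -/
def assocLeftTerm (d : R → R) (F G H : ℤ → ℕ → R) (n : ℤ) (m : ℕ) :
    (ℤ × ℕ × ℕ) × (ℤ × ℕ × ℕ) → R
  | ((u, s, p₂), (i, r, p)) =>
    if p₂ + s ≤ m ∧ p + r ≤ p₂ then
      (Ring.choose i r * Ring.choose u s) •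
        (F i p * (d^[r] (G (u - i + r) (p₂ - p - r)) * d^[s] (H (n - u + s) (m - p₂ - s))))
    else 0

theorem mulTerm_gMul_left_eq_finsum {d : R → R} (hd : d 0 = 0) {F G : ℤ → ℕ → R} (hF : isDP F)
    (hG : isDP G) (H : ℤ → ℕ → R) (n : ℤ) (m : ℕ) (x : ℤ × ℕ × ℕ) :
    mulTerm d (gMul d F G) H n m x = ∑ᶠ y, assocLeftTerm d F G H n m (x, y) := by
  obtain ⟨u, s, p₂⟩ := x
  rw [mulTerm, gMul_eq_finsum_mulTerm]
  split_ifs with hm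
  · have hfin := hasFiniteSupport_mulTerm hd hF hG u p₂
    rw [finsum_mul' _ _ hfin, smul_finsum' _ (hfin.subset (support_mul_subset_left _ _))]
    refine finsum_congr fun ⟨i, r, p⟩ => ?_
    simp only [mulTerm, assocLeftTerm, hm, true_and]
    split_ifs
    · rw [smul_mul_assoc, smul_smul, mul_assoc, mul_comm (Ring.choose u s)]
    · rw [zero_mul, smul_zero]
  · exact (finsum_eq_zero_of_forall_eq_zero fun y => if_neg fun h => hm h.1).symm

def assocLeftIndex : ℤ × ℤ × ℕ × ℕ × ℕ × ℕ → (ℤ × ℕ × ℕ) × (ℤ × ℕ × ℕ)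
  | (i, j, a, b, p, q) => ((i + j - a, b, p + q + a), (i, a, p))

theorem assocLeftIndex_injective : Injective assocLeftIndex := by
  rintro ⟨i, j, a, b, p, q⟩ ⟨i', j', a', b', p', q'⟩ h
  simp only [assocLeftIndex, Prod.mk.injEq] at h ⊢
  omega

theorem support_assocLeftTerm_subset (d : R → R) (F G H : ℤ → ℕ → R) (n : ℤ) (m : ℕ) :
    support (assocLeftTerm d F G H n m) ⊆ Set.range assocLeftIndex := by
  rintro ⟨⟨u, s, p₂⟩, i, r, p⟩ h
  have hr : p + r ≤ p₂ := by
    by_contra hr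
    exact h (if_neg fun h' => hr h'.2)
  refine ⟨(i, u - i + r, r, s, p, p₂ - p - r), ?_⟩
  simp only [assocLeftIndex, Prod.mk.injEq, true_and, and_true]
  omega

theorem assocLeftTerm_assocLeftIndex (d : R → R) (F G H : ℤ → ℕ → R) (n : ℤ) (m : ℕ)
    (w : ℤ × ℤ × ℕ × ℕ × ℕ × ℕ) :
    assocLeftTerm d F G H n m (assocLeftIndex w) = assocLeftCoeff w • tripleTerm d F G H n m w := by
  obtain ⟨i, j, a, b, p, q⟩ := w
  have hj : i + j - a - i + a = j := by ring
  have hq : p + q + a - p - a = q := by omega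
  have hl : n - (i + j - a) + b = n - i - j + a + b := by ring
  have hc : m - (p + q + a) - b = m - p - q - a - b := by omega
  have hp : p + a ≤ p + q + a := by omega
  simp only [assocLeftIndex, assocLeftTerm, assocLeftCoeff, tripleTerm]
  rw [hj, hq, hl, hc, smul_ite, smul_zero]
  simp only [hp, and_true]

theorem gMul_gMul_left_eq_finsum {d : R → R} (hd : d 0 = 0) {F G H : ℤ → ℕ → R} (hF : isDP F)
    (hG : isDP G) (hH : isDP H) (n : ℤ) (m : ℕ) :
    gMul d (gMul d F G) H n m = ∑ᶠ w, assocLeftCoeff w • tripleTerm d F G H n m w := by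
  have hsupp := support_assocLeftTerm_subset d F G H n m
  have hfin : HasFiniteSupport (assocLeftTerm d F G H n m) :=
    HasFiniteSupport.of_support_subset_image _ (s := Set.univ) (by rwa [Set.image_univ])
      (fun w _ => assocLeftTerm_assocLeftIndex d F G H n m w)
      ((hasFiniteSupport_tripleTerm hd hF hG hH n m).smul_right assocLeftCoeff)
  rw [gMul_eq_finsum_mulTerm, finsum_congr (mulTerm_gMul_left_eq_finsum hd hF hG H n m),
    ← finsum_curry _ hfin]
  exact finsum_eq_finsum_of_injective _ assocLeftIndex_injective hsupp
    (assocLeftTerm_assocLeftIndex d F G H n m)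

/-- The summand of `F·(G·H)` indexed by the terms `(i, t, p)` of the outer and `(j, s, q)` of
the inner product, and by the number `a` of the outer derivatives `∂^t` that fall on `G`. -/
def assocRightTerm (d : R → R) (F G H : ℤ → ℕ → R) (n : ℤ) (m : ℕ) :
    (ℤ × ℕ × ℕ) × (ℤ × ℕ × ℕ) × ℕ → R
  | ((i, t, p), (j, s, q), a) =>
    if p + t ≤ m ∧ q + s ≤ m - p - t ∧ a ≤ t then
      (Ring.choose i t * t.choose a * Ring.choose j s) •
        (F i p * (d^[a] (G j q) * d^[t - a + s] (H (n - i + t - j + s) (m - p - t - q - s))))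
    else 0

theorem mulTerm_gMul_right_eq_finsum {S : Type*} [CommSemiring S] [Algebra S R]
    (d : Derivation S R R) (F : ℤ → ℕ → R) {G H : ℤ → ℕ → R} (hG : isDP G) (hH : isDP H)
    (n : ℤ) (m : ℕ) (x : ℤ × ℕ × ℕ) :
    mulTerm d F (gMul d G H) n m x = ∑ᶠ y, ∑ᶠ a, assocRightTerm d F G H n m (x, y, a) := by
  obtain ⟨i, t, p⟩ := x
  rw [mulTerm, gMul_eq_finsum_mulTerm]
  split_ifs with hm
  · have hfin := hasFiniteSupport_mulTerm d.map_zero hG hH (n - i + t) (m - p - t)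
    rw [d.iterate_eq_pow, map_finsum _ hfin, mul_finsum' _ _ (hfin.fun_comp (map_zero _)),
      smul_finsum' _ ((hfin.fun_comp (map_zero _)).fun_comp (mul_zero _))]
    refine finsum_congr fun ⟨j, s, q⟩ => ?_
    rw [← d.iterate_eq_pow, mulTerm]
    split_ifs with hq
    · rw [d.iterate_eq_pow, map_zsmul, ← d.iterate_eq_pow, d.iterate_apply_mul, smul_sum,
        mul_sum, smul_sum, Nat.sum_antidiagonal_eq_finsum]
      refine finsum_congr fun a => ?_
      simp only [assocRightTerm, hm, hq, true_and]
      split_ifs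
      · rw [iterate_add_apply, ← Nat.cast_smul_eq_nsmul ℤ, mul_smul_comm,
          mul_smul_comm, smul_smul, smul_smul]
        congr 1
        ring
      · rfl
    · rw [d.iterate_eq_pow, map_zero, mul_zero, smul_zero]
      exact (finsum_eq_zero_of_forall_eq_zero fun a => if_neg fun h => hq h.2.1).symm
  · exact (finsum_eq_zero_of_forall_eq_zero fun y =>
      finsum_eq_zero_of_forall_eq_zero fun a => if_neg fun h => hm h.1).symm

def assocRightIndex : (ℤ × ℤ × ℕ × ℕ × ℕ × ℕ) × ℕ → (ℤ × ℕ × ℕ) × (ℤ × ℕ × ℕ) × ℕ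
  | ((i, j, a, b, p, q), e) => ((i, a + e, p), (j, b - e, q), a)

theorem assocRightIndex_injOn : Set.InjOn assocRightIndex {we | we.2 ≤ we.1.2.2.2.1} := by
  rintro ⟨⟨i, j, a, b, p, q⟩, e⟩ (h : e ≤ b) ⟨⟨i', j', a', b', p', q'⟩, e'⟩ (h' : e' ≤ b') heq
  simp only [assocRightIndex, Prod.mk.injEq] at heq ⊢
  omega

theorem support_assocRightTerm_subset (d : R → R) (F G H : ℤ → ℕ → R) (n : ℤ) (m : ℕ) :
    support (assocRightTerm d F G H n m) ⊆ assocRightIndex '' {we | we.2 ≤ we.1.2.2.2.1} := by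
  rintro ⟨⟨i, t, p⟩, ⟨j, r, q⟩, a⟩ h
  have ha : a ≤ t := by
    by_contra ha
    exact h (if_neg fun h' => ha h'.2.2)
  refine ⟨((i, j, a, t - a + r, p, q), t - a), (show t - a ≤ t - a + r by omega), ?_⟩
  simp only [assocRightIndex, Prod.mk.injEq, true_and, and_true]
  omega

theorem assocRightTerm_assocRightIndex (d : R → R) (F G H : ℤ → ℕ → R) (n : ℤ) (m : ℕ)
    (w : ℤ × ℤ × ℕ × ℕ × ℕ × ℕ) {e : ℕ} (he : e ≤ w.2.2.2.1) :
    assocRightTerm d F G H n m (assocRightIndex (w, e)) =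
      assocRightCoeff w e • tripleTerm d F G H n m w := by
  obtain ⟨i, j, a, b, p, q⟩ := w
  dsimp only at he
  have hm : (p + (a + e) ≤ m ∧ q + (b - e) ≤ m - p - (a + e) ∧ a ≤ a + e) ↔
      p + q + a + b ≤ m := by omega
  have hb : a + e - a + (b - e) = b := by omega
  have hl : n - i + ↑(a + e) - j + ↑(b - e) = n - i - j + a + b := by
    push_cast [Nat.cast_sub he]
    ring
  have hc : m - p - (a + e) - q - (b - e) = m - p - q - a - b := by omega
  simp only [assocRightIndex, assocRightTerm, assocRightCoeff, tripleTerm, if_pos he, hm, hb,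
    hl, hc, smul_ite, smul_zero, nsmul_eq_mul]
  split_ifs
  · congr 1
    ring
  · rfl

theorem assocRightCoeff_of_not_le {w : ℤ × ℤ × ℕ × ℕ × ℕ × ℕ} {e : ℕ} (he : ¬e ≤ w.2.2.2.1) :
    assocRightCoeff w e = 0 :=
  if_neg he

theorem hasFiniteSupport_assocRightCoeff (w : ℤ × ℤ × ℕ × ℕ × ℕ × ℕ) :
    HasFiniteSupport (assocRightCoeff w) :=
  (Set.finite_Iic w.2.2.2.1).subset fun _ he => not_not.1 (mt assocRightCoeff_of_not_le he)

theorem hasFiniteSupport_assocRightCoeff_smul_tripleTerm {d : R → R} (hd : d 0 = 0)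
    {F G H : ℤ → ℕ → R} (hF : isDP F) (hG : isDP G) (hH : isDP H) (n : ℤ) (m : ℕ) :
    HasFiniteSupport fun we : (ℤ × ℤ × ℕ × ℕ × ℕ × ℕ) × ℕ =>
      assocRightCoeff we.1 we.2 • tripleTerm d F G H n m we.1 := by
  refine ((hasFiniteSupport_tripleTerm hd hF hG hH n m).prod (Set.finite_Iic m)).subset ?_
  rintro ⟨w, e⟩ h
  have hT : tripleTerm d F G H n m w ≠ 0 := right_ne_zero_of_smul h
  have he : e ≤ w.2.2.2.1 :=
    not_not.1 fun he => h (by simp only [assocRightCoeff_of_not_le he, zero_smul])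
  obtain ⟨i, j, a, b, p, q⟩ := w
  exact ⟨hT, show e ≤ m by have := (tripleTerm_ne_zero hd hT).1; dsimp only at he; omega⟩

theorem gMul_gMul_right_eq_finsum {S : Type*} [CommSemiring S] [Algebra S R]
    (d : Derivation S R R) {F G H : ℤ → ℕ → R} (hF : isDP F) (hG : isDP G) (hH : isDP H)
    (n : ℤ) (m : ℕ) :
    gMul d F (gMul d G H) n m = ∑ᶠ w, assocLeftCoeff w • tripleTerm d F G H n m w := by
  have hsupp := support_assocRightTerm_subset d F G H n m
  have hfg : ∀ we ∈ {we : (ℤ × ℤ × ℕ × ℕ × ℕ × ℕ) × ℕ | we.2 ≤ we.1.2.2.2.1},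
      assocRightTerm d F G H n m (assocRightIndex we) =
        assocRightCoeff we.1 we.2 • tripleTerm d F G H n m we.1 :=
    fun we h => assocRightTerm_assocRightIndex d F G H n m we.1 h
  have hfin := hasFiniteSupport_assocRightCoeff_smul_tripleTerm d.map_zero hF hG hH n m
  rw [gMul_eq_finsum_mulTerm, finsum_congr (mulTerm_gMul_right_eq_finsum d F hG hH n m),
    ← finsum_curry₃ _ (HasFiniteSupport.of_support_subset_image _ hsupp hfg hfin),
    finsum_eq_finsum_of_injOn _ (fun we h => by rw [assocRightCoeff_of_not_le h, zero_smul])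
      assocRightIndex_injOn hsupp hfg,
    finsum_curry _ hfin]
  refine finsum_congr fun w => ?_
  dsimp only
  rw [← finsum_smul' (hasFiniteSupport_assocRightCoeff w), ← assocLeftCoeff_eq_finsum]

theorem gMul_assoc {S : Type*} [CommSemiring S] [Algebra S R] (d : Derivation S R R)
    {F G H : ℤ → ℕ → R} (hF : isDP F) (hG : isDP G) (hH : isDP H) :
    gMul d (gMul d F G) H = gMul d F (gMul d G H) := by
  funext n m
  rw [gMul_gMul_left_eq_finsum d.map_zero hF hG hH, gMul_gMul_right_eq_finsum d hF hG hH]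

end Associativity

theorem stmt_1 {R : Type*} [CommRing R] [Algebra ℚ R]
    (𝒜 : ℕ → Submodule ℚ R) (d : Derivation ℚ R R)
    (hgmul : ∀ (i j : ℕ) (a b : R), a ∈ 𝒜 i → b ∈ 𝒜 j → a * b ∈ 𝒜 (i + j))
    (hgder : ∀ (i : ℕ) (a : R), a ∈ 𝒜 i → d a ∈ 𝒜 (i + 1)) :
    -- the product of two elements of D⁺ is well defined: each graded
    -- component of each coefficient is a (convergent, indeed finite) sum
    (∀ F G : ℤ → ℕ → R, gmem 𝒜 F → gmem 𝒜 G → isDP F → isDP G →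
      ∀ (n : ℤ) (m : ℕ), (Function.support (gTerm (⇑d) F G n m)).Finite) ∧
    -- and the product again lies in D⁺
    (∀ F G : ℤ → ℕ → R, gmem 𝒜 F → gmem 𝒜 G → isDP F → isDP G →
      gmem 𝒜 (gMul (⇑d) F G) ∧ isDP (gMul (⇑d) F G)) ∧
    -- with this product D⁺ is a unital associative algebra:
    -- associativity,
    (∀ F G H : ℤ → ℕ → R, gmem 𝒜 F → gmem 𝒜 G → gmem 𝒜 H →
      isDP F → isDP G → isDP H →
      gMul (⇑d) (gMul (⇑d) F G) H = gMul (⇑d) F (gMul (⇑d) G H)) ∧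
    -- bilinearity,
    (∀ F G H : ℤ → ℕ → R, gmem 𝒜 F → gmem 𝒜 G → gmem 𝒜 H →
      isDP F → isDP G → isDP H →
      gMul (⇑d) F (G + H) = gMul (⇑d) F G + gMul (⇑d) F H ∧
      gMul (⇑d) (F + G) H = gMul (⇑d) F H + gMul (⇑d) G H) ∧
    (∀ (c : ℚ) (F G : ℤ → ℕ → R), gmem 𝒜 F → gmem 𝒜 G → isDP F → isDP G →
      gMul (⇑d) (c • F) G = c • gMul (⇑d) F G ∧
      gMul (⇑d) F (c • G) = c • gMul (⇑d) F G) ∧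
    -- and unitality;
    (∀ F : ℤ → ℕ → R, gmem 𝒜 F → isDP F →
      gMul (⇑d) gOne F = F ∧ gMul (⇑d) F gOne = F) ∧
    -- moreover (D⁻)₊ ⊆ D⁻ ∩ D⁺
    (∀ F : ℤ → ℕ → R, gmem 𝒜 F → isDM F →
      gmem 𝒜 (gPlus F) ∧ isDM (gPlus F) ∧ isDP (gPlus F)) ∧
    -- and (D⁺)₋ ⊆ D⁻ ∩ D⁺
    (∀ F : ℤ → ℕ → R, gmem 𝒜 F → isDP F →
      gmem 𝒜 (gMinus F) ∧ isDM (gMinus F) ∧ isDP (gMinus F)) := by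
  refine ⟨fun F G _ _ hF hG => hasFiniteSupport_gTerm d.map_zero hF hG,
    fun F G hFm hGm hF hG =>
      ⟨gmem_gMul d.map_zero hgmul hgder hFm hGm hF hG, isDP_gMul d.map_zero hF hG⟩,
    fun F G H _ _ _ hF hG hH => gMul_assoc d hF hG hH,
    fun F G H _ _ _ hF hG hH => ⟨gMul_add_right hF hG hH, gMul_add_left d.map_zero hF hG hH⟩,
    fun c F G _ _ hF hG => ⟨gMul_smul_left d.map_zero c hF hG, gMul_smul_right c hF hG⟩,
    fun F _ _ => ⟨gOne_mul d F, gMul_one d.map_zero d.map_one_eq_zero F⟩,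
    fun F hFm hF => ⟨gmem_gPlus hFm, isDM_gPlus hF, isDP_gPlus F⟩,
    fun F hFm hF => ⟨gmem_gMinus hFm, isDM_gMinus F, isDP_gMinus hF⟩⟩
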